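/- arXiv:2310.10303 — 13 statements merged into one kernel-verified Lean document; each statement's English description precedes it below -/
import Mathlib

section
/- For real numbers x_1 ≤ x_2 ≤ ... ≤ x_n with x_1 < x_n, the absolute difference between the median and the mean is at most the (population) standard deviation s, i.e., |med x - x̄| ≤ s. -/
open Finset

/-! The median minimises the mean absolute deviation: pairing `x i` with `x (n + 1 - i)`, the
median lies between them, so `|x i - med| + |x (n + 1 - i) - med| = |x i - x (n + 1 - i)|`, which
the triangle inequality bounds by the same expression with any `c` in place of `med`. Hence
`|med - x̄| ≤ (1/n) ∑ |x i - med| ≤ (1/n) ∑ |x i - x̄|`, and the last mean is at most `s` by the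
Cauchy–Schwarz inequality. -/

lemma abs_sum_div_card_sub_le {ι : Type*} {s : Finset ι} (hs : s.Nonempty) (f : ι → ℝ) (c : ℝ) :
    |(∑ i ∈ s, f i) / #s - c| ≤ (∑ i ∈ s, |f i - c|) / #s := by
  have hcard : (0 : ℝ) < #s := by exact_mod_cast hs.card_pos
  calc |(∑ i ∈ s, f i) / #s - c| = |∑ i ∈ s, (f i - c)| / #s := by
        rw [sum_sub_distrib, sum_const, nsmul_eq_mul, div_sub' hcard.ne', abs_div,
          abs_of_pos hcard, mul_comm]
    _ ≤ (∑ i ∈ s, |f i - c|) / #s := by gcongr; exact abs_sum_le_sum_abs _ _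

lemma sum_abs_div_card_le_sqrt {ι : Type*} (s : Finset ι) (f : ι → ℝ) :
    (∑ i ∈ s, |f i|) / #s ≤ Real.sqrt ((∑ i ∈ s, f i ^ 2) / #s) := by
  refine (le_abs_self _).trans (Real.abs_le_sqrt ?_)
  simpa only [sq_abs] using sum_div_card_sq_le_sum_sq_div_card (s := s) (f := fun i => |f i|)

lemma abs_sub_add_abs_sub_of_mem_uIcc {a b m : ℝ} (h : m ∈ Set.uIcc a b) :
    |a - m| + |b - m| = |a - b| := by
  have := dist_add_dist_of_mem_segment (segment_eq_uIcc a b ▸ h)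
  rwa [Real.dist_eq, Real.dist_eq, Real.dist_eq, abs_sub_comm m b] at this

lemma sum_reflect_Icc (f : ℕ → ℝ) (n : ℕ) :
    ∑ i ∈ Icc 1 n, f (n + 1 - i) = ∑ i ∈ Icc 1 n, f i := by
  refine sum_nbij' (fun i => n + 1 - i) (fun i => n + 1 - i) ?_ ?_ ?_ ?_ fun _ _ => rfl <;>
    · intro i hi; simp only [mem_Icc] at *; omega

lemma sum_abs_sub_le_of_mem_uIcc_reflect {n : ℕ} {x : ℕ → ℝ} {m : ℝ}
    (hm : ∀ i ∈ Icc 1 n, m ∈ Set.uIcc (x i) (x (n + 1 - i))) (c : ℝ) :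
    ∑ i ∈ Icc 1 n, |x i - m| ≤ ∑ i ∈ Icc 1 n, |x i - c| := by
  have hpair (y : ℝ) :
      2 * ∑ i ∈ Icc 1 n, |x i - y| = ∑ i ∈ Icc 1 n, (|x i - y| + |x (n + 1 - i) - y|) := by
    rw [two_mul, sum_add_distrib, sum_reflect_Icc (fun i => |x i - y|)]
  suffices 2 * ∑ i ∈ Icc 1 n, |x i - m| ≤ 2 * ∑ i ∈ Icc 1 n, |x i - c| by linarith
  rw [hpair, hpair]
  refine sum_le_sum fun i hi => ?_
  rw [abs_sub_add_abs_sub_of_mem_uIcc (hm i hi)]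
  simpa only [abs_sub_comm c] using abs_sub_le (x i) c (x (n + 1 - i))

lemma median_mem_uIcc_reflect {n : ℕ} {x : ℕ → ℝ} (hmono : MonotoneOn x (Icc 1 n)) {med : ℝ}
    (hmed : (∃ k : ℕ, n = 2 * k + 1 ∧ med = x (k + 1)) ∨
            (∃ k : ℕ, n = 2 * k ∧ med = (x k + x (k + 1)) / 2)) :
    ∀ i ∈ Icc 1 n, med ∈ Set.uIcc (x i) (x (n + 1 - i)) := by
  have hx {i j : ℕ} (hi : 1 ≤ i) (hij : i ≤ j) (hj : j ≤ n) : x i ≤ x j :=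
    hmono (mem_Icc.2 ⟨hi, by omega⟩) (mem_Icc.2 ⟨by omega, hj⟩) hij
  have lower_half {j : ℕ} (hj : 1 ≤ j) (hj' : 2 * j ≤ n + 1) :
      x j ≤ med ∧ med ≤ x (n + 1 - j) := by
    rcases hmed with ⟨k, rfl, rfl⟩ | ⟨k, rfl, rfl⟩
    · exact ⟨hx hj (by omega) (by omega), hx (by omega) (by omega) (by omega)⟩
    · have : x j ≤ x k := hx hj (by omega) (by omega)
      have : x k ≤ x (k + 1) := hx (by omega) (by omega) (by omega)
      have : x (k + 1) ≤ x (2 * k + 1 - j) := hx (by omega) (by omega) (by omega)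
      constructor <;> linarith
  intro i hi
  simp only [mem_Icc] at hi
  rcases le_total (2 * i) (n + 1) with h | h
  · exact Set.mem_uIcc.2 (Or.inl (lower_half hi.1 h))
  · have := lower_half (j := n + 1 - i) (by omega) (by omega)
    rw [show n + 1 - (n + 1 - i) = i by omega] at this
    exact Set.mem_uIcc.2 (Or.inr this)

theorem stmt_0_general (n : ℕ) (hn : 2 ≤ n) (x : ℕ → ℝ)
    (hmono : ∀ i j, 1 ≤ i → i ≤ j → j ≤ n → x i ≤ x j)
    (med : ℝ)
    (hmed : (∃ k : ℕ, n = 2 * k + 1 ∧ med = x (k + 1)) ∨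
            (∃ k : ℕ, n = 2 * k ∧ med = (x k + x (k + 1)) / 2)) :
    |med - (∑ i ∈ Icc 1 n, x i) / n| ≤
      Real.sqrt ((∑ i ∈ Icc 1 n, (x i - (∑ j ∈ Icc 1 n, x j) / n) ^ 2) / n) := by
  have hs : (Icc 1 n).Nonempty := nonempty_Icc.2 (by omega)
  have hcard : #(Icc 1 n) = n := by simp
  have hmono' : MonotoneOn x (Icc 1 n) := fun i hi j hj hij =>
    hmono i j (mem_Icc.1 hi).1 hij (mem_Icc.1 hj).2
  set xb := (∑ i ∈ Icc 1 n, x i) / n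
  calc |med - xb| = |xb - med| := abs_sub_comm _ _
    _ ≤ (∑ i ∈ Icc 1 n, |x i - med|) / n := by
        simpa only [hcard] using abs_sum_div_card_sub_le hs x med
    _ ≤ (∑ i ∈ Icc 1 n, |x i - xb|) / n := by
        gcongr ?_ / _
        exact sum_abs_sub_le_of_mem_uIcc_reflect (median_mem_uIcc_reflect hmono' hmed) xb
    _ ≤ _ := by simpa only [hcard] using sum_abs_div_card_le_sqrt (Icc 1 n) (fun i => x i - xb)

theorem stmt_0 (n : ℕ) (hn : 2 ≤ n) (x : ℕ → ℝ)
    (hmono : ∀ i j, 1 ≤ i → i ≤ j → j ≤ n → x i ≤ x j)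
    (hlt : x 1 < x n)
    (med : ℝ)
    (hmed : (∃ k : ℕ, n = 2 * k + 1 ∧ med = x (k + 1)) ∨
            (∃ k : ℕ, n = 2 * k ∧ med = (x k + x (k + 1)) / 2)) :
    |med - (∑ i ∈ Icc 1 n, x i) / n| ≤
      Real.sqrt ((∑ i ∈ Icc 1 n, (x i - (∑ j ∈ Icc 1 n, x j) / n) ^ 2) / n) :=
  stmt_0_general n hn x hmono med hmed
end

section
/- Let n = 2k+1 with k ≥ 1 and x_1 ≤ ... ≤ x_n reals with x_1 < x_n. Then |x_{k+1} - x̄| / s ≤ sqrt(k/(k+1)), where x̄ is the mean and s the population standard deviation. -/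
/-!
Let `t = m - x̄` be the offset of the median from the mean, say `t ≥ 0`. The `k + 1` values
from the median upward all deviate from `x̄` by at least `t`, and since the deviations sum to
zero the other `k` deviations sum to at most `-(k + 1) t`; by Cauchy–Schwarz their squares sum
to at least `(k + 1)² t² / k`. Adding both parts gives `(k + 1)(2k + 1) t² ≤ k · n s²`.
-/

open Finset

lemma sum_sub_sum_div_card_eq_zero {ι : Type*} (s : Finset ι) (x : ι → ℝ) :
    ∑ i ∈ s, (x i - (∑ j ∈ s, x j) / #s) = 0 := by
  rcases s.eq_empty_or_nonempty with rfl | hs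
  · simp
  · rw [sum_sub_distrib, sum_const, nsmul_eq_mul, mul_div_cancel₀ _ (by simpa using hs.ne_empty),
      sub_self]

lemma card_mul_card_mul_sq_le_of_sum_eq_zero {ι : Type*} [DecidableEq ι] {s A : Finset ι}
    (hA : A ⊆ s) {d : ι → ℝ} (hsum : ∑ i ∈ s, d i = 0) {t : ℝ} (ht : 0 ≤ t)
    (hdA : ∀ i ∈ A, t ≤ d i) :
    #A * #s * t ^ 2 ≤ #(s \ A) * ∑ i ∈ s, d i ^ 2 := by
  have hsplit (f : ι → ℝ) : ∑ i ∈ s, f i = ∑ i ∈ s \ A, f i + ∑ i ∈ A, f i :=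
    (sum_sdiff hA).symm
  have hcard : (#s : ℝ) = #(s \ A) + #A := by exact_mod_cast (card_sdiff_add_card_eq_card hA).symm
  have hsumA : #A * t ≤ ∑ i ∈ A, d i := by
    simpa using card_nsmul_le_sum A d t hdA
  have hsqA : #A * t ^ 2 ≤ ∑ i ∈ A, d i ^ 2 := by
    simpa using card_nsmul_le_sum A (d · ^ 2) (t ^ 2) fun i hi =>
      pow_le_pow_left₀ ht (hdA i hi) 2
  have hcompl : (#A * t) ^ 2 ≤ #(s \ A) * ∑ i ∈ s \ A, d i ^ 2 := calc
    (#A * t) ^ 2 ≤ (∑ i ∈ A, d i) ^ 2 := pow_le_pow_left₀ (by positivity) hsumA 2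
    _ = (∑ i ∈ s \ A, d i) ^ 2 := by
      rw [hsplit] at hsum
      rw [eq_neg_of_add_eq_zero_right hsum, neg_sq]
    _ ≤ #(s \ A) * ∑ i ∈ s \ A, d i ^ 2 := sq_sum_le_card_mul_sum_sq
  rw [hsplit, hcard]
  linarith [mul_le_mul_of_nonneg_left hsqA (Nat.cast_nonneg (α := ℝ) #(s \ A))]

lemma median_sub_mean_sq_le (k : ℕ) (x : ℕ → ℝ) (hx : MonotoneOn x (Icc 1 (2 * k + 1))) :
    (k + 1) * (2 * k + 1) * (x (k + 1) - (∑ i ∈ Icc 1 (2 * k + 1), x i) / (2 * k + 1)) ^ 2 ≤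
      k * ∑ i ∈ Icc 1 (2 * k + 1),
        (x i - (∑ j ∈ Icc 1 (2 * k + 1), x j) / (2 * k + 1)) ^ 2 := by
  set s := Icc 1 (2 * k + 1)
  have hs : (#s : ℝ) = 2 * k + 1 := by simp [s]
  set μ := (∑ i ∈ s, x i) / (2 * k + 1)
  have hsum : ∑ i ∈ s, (x i - μ) = 0 := by
    simpa [μ, ← hs] using sum_sub_sum_div_card_eq_zero s x
  have hmid : k + 1 ∈ s := mem_Icc.2 ⟨by omega, by omega⟩
  rcases le_total μ (x (k + 1)) with hμ | hμ
  · have hA : Icc (k + 1) (2 * k + 1) ⊆ s := Icc_subset_Icc_left (by omega)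
    have hcompl : s \ Icc (k + 1) (2 * k + 1) = Icc 1 k := by ext; simp [s]; omega
    have := card_mul_card_mul_sq_le_of_sum_eq_zero hA hsum (sub_nonneg.2 hμ)
      fun i hi => sub_le_sub_right (hx hmid (hA hi) (mem_Icc.1 hi).1) μ
    simp only [hcompl, hs, Nat.card_Icc] at this
    push_cast [show 2 * k + 1 + 1 - (k + 1) = k + 1 by omega] at this
    simpa using this
  · have hA : Icc 1 (k + 1) ⊆ s := Icc_subset_Icc_right (by omega)
    have hcompl : s \ Icc 1 (k + 1) = Icc (k + 2) (2 * k + 1) := by ext; simp [s]; omega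
    have hsum' : ∑ i ∈ s, (μ - x i) = 0 := by
      rw [← neg_eq_zero, ← sum_neg_distrib]; simpa using hsum
    have := card_mul_card_mul_sq_le_of_sum_eq_zero hA hsum' (sub_nonneg.2 hμ)
      fun i hi => sub_le_sub_left (hx (hA hi) hmid (mem_Icc.1 hi).2) μ
    simp only [hcompl, hs, Nat.card_Icc] at this
    push_cast [show 2 * k + 1 + 1 - (k + 2) = k by omega] at this
    simpa only [sub_sq_comm μ] using this

theorem stmt_5_general (k n : ℕ) (hn : n = 2 * k + 1) (x : ℕ → ℝ)
    (hmono : ∀ i j, 1 ≤ i → i ≤ j → j ≤ n → x i ≤ x j) :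
    |x (k + 1) - (∑ i ∈ Icc 1 n, x i) / n| /
      Real.sqrt ((∑ i ∈ Icc 1 n, (x i - (∑ j ∈ Icc 1 n, x j) / n) ^ 2) / n) ≤
      Real.sqrt ((k : ℝ) / (k + 1)) := by
  subst hn
  have key := median_sub_mean_sq_le k x
    fun i hi j hj hij => hmono i j (mem_Icc.1 hi).1 hij (mem_Icc.1 hj).2
  push_cast
  refine div_le_of_le_mul₀ (Real.sqrt_nonneg _) (Real.sqrt_nonneg _) ?_
  rw [← Real.sqrt_mul (by positivity), ← Real.sqrt_sq_eq_abs]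
  refine Real.sqrt_le_sqrt ?_
  rw [div_mul_div_comm, le_div_iff₀ (by positivity)]
  linarith

theorem stmt_5 (k n : ℕ) (hk : 1 ≤ k) (hn : n = 2 * k + 1) (x : ℕ → ℝ)
    (hmono : ∀ i j, 1 ≤ i → i ≤ j → j ≤ n → x i ≤ x j)
    (hlt : x 1 < x n) :
    |x (k + 1) - (∑ i ∈ Icc 1 n, x i) / n| /
      Real.sqrt ((∑ i ∈ Icc 1 n, (x i - (∑ j ∈ Icc 1 n, x j) / n) ^ 2) / n) ≤
      Real.sqrt ((k : ℝ) / (k + 1)) :=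
  stmt_5_general k n hn x hmono
end

section
/- Let n = 2k with k ≥ 2 and x_1 ≤ ... ≤ x_n reals with x_1 < x_n. Then |(x_k + x_{k+1})/2 - x̄| / s ≤ sqrt((k-1)/(k+1)), where x̄ is the mean and s the population standard deviation. -/
/-! Measure everything from the median `m`: with `d i = x i - m`, `T = ∑ d i` and
`Q = ∑ d i ^ 2`, the mean is `m + T / n` and `n s² = Q - T² / n`, so a bound `T² ≤ c Q` with
`c < n` gives `|m - x̄| / s ≤ √(c / (n - c))`. For the median of `2k` sorted values the two
middle deviations cancel and the others are `k - 1` nonpositive and `k - 1` nonnegative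
numbers; a sum of two numbers of opposite signs squares to at most the sum of their squares,
and Cauchy–Schwarz on each half gives `T² ≤ (k - 1) Q`. With `c = k - 1`, `n = 2k` this is
the bound `√((k - 1) / (k + 1))`. -/

open Finset

theorem sum_sq_sub_mean {ι : Type*} (s : Finset ι) (f : ι → ℝ) (m : ℝ) :
    ∑ i ∈ s, (f i - (∑ j ∈ s, f j) / #s) ^ 2 =
      ∑ i ∈ s, (f i - m) ^ 2 - (∑ i ∈ s, (f i - m)) ^ 2 / #s := by
  rcases s.eq_empty_or_nonempty with rfl | hs
  · simp
  have hn : (#s : ℝ) ≠ 0 := by exact_mod_cast hs.card_ne_zero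
  simp only [sub_sq, sum_add_distrib, sum_sub_distrib, ← sum_mul, ← mul_sum, sum_const,
    nsmul_eq_mul]
  field_simp
  ring

theorem abs_div_sqrt_le_sqrt {a b c : ℝ} (hc : 0 ≤ c) (h : a ^ 2 ≤ c * b) :
    |a| / √b ≤ √c := by
  rcases (Real.sqrt_nonneg b).eq_or_lt with hb | hb
  · rw [← hb, div_zero]
    exact Real.sqrt_nonneg c
  rw [div_le_iff₀ hb, ← Real.sqrt_mul hc, ← Real.sqrt_sq_eq_abs]
  exact Real.sqrt_le_sqrt h

theorem abs_sub_mean_div_stdDev_le {ι : Type*} (s : Finset ι) (f : ι → ℝ) {m c : ℝ}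
    (hc₀ : 0 ≤ c) (hc : c < #s)
    (h : (∑ i ∈ s, (f i - m)) ^ 2 ≤ c * ∑ i ∈ s, (f i - m) ^ 2) :
    |m - (∑ i ∈ s, f i) / #s| / √((∑ i ∈ s, (f i - (∑ j ∈ s, f j) / #s) ^ 2) / #s) ≤
      √(c / (#s - c)) := by
  set n : ℝ := (#s : ℝ)
  set T := ∑ i ∈ s, (f i - m)
  set Q := ∑ i ∈ s, (f i - m) ^ 2
  have hn : 0 < n := hc₀.trans_lt hc
  have hnc : 0 < n - c := sub_pos.2 hc
  have hmean : m - (∑ i ∈ s, f i) / n = -(T / n) := by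
    simp only [T, sum_sub_distrib, sum_const, nsmul_eq_mul]
    field_simp
    ring
  rw [sum_sq_sub_mean s f m, hmean]
  refine abs_div_sqrt_le_sqrt (div_nonneg hc₀ hnc.le) ?_
  have hgap : c / (n - c) * ((Q - T ^ 2 / n) / n) - (-(T / n)) ^ 2 =
      (c * Q - T ^ 2) / (n * (n - c)) := by
    field_simp
    ring
  have : 0 ≤ (c * Q - T ^ 2) / (n * (n - c)) := div_nonneg (by linarith) (by positivity)
  linarith

theorem sum_Icc_one_two_mul_eq (k : ℕ) (hk : 1 ≤ k) (f : ℕ → ℝ) :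
    ∑ i ∈ Icc 1 (2 * k), f i =
      ∑ i ∈ Ico 1 k, f i + (f k + f (k + 1)) + ∑ i ∈ Ioc (k + 1) (2 * k), f i := by
  rw [← Ico_add_one_right_eq_Icc, ← Ico_add_one_add_one_eq_Ioc,
    ← sum_Ico_consecutive f (show 1 ≤ k + 1 + 1 by omega) (show k + 1 + 1 ≤ 2 * k + 1 by omega),
    ← sum_Ico_consecutive f hk (show k ≤ k + 1 + 1 by omega), sum_Ico_succ_top (by omega),
    sum_Ico_succ_top le_rfl, Ico_self, sum_empty, zero_add]

theorem sq_add_le_sq_add_sq {a b : ℝ} (ha : a ≤ 0) (hb : 0 ≤ b) :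
    (a + b) ^ 2 ≤ a ^ 2 + b ^ 2 := by
  nlinarith [mul_nonpos_of_nonpos_of_nonneg ha hb]

theorem sq_sum_Icc_two_mul_le_of_nonpos_of_nonneg (k : ℕ) (hk : 1 ≤ k) (d : ℕ → ℝ)
    (hlow : ∀ i ∈ Ico 1 k, d i ≤ 0) (hhigh : ∀ i ∈ Ioc (k + 1) (2 * k), 0 ≤ d i)
    (hmid : d k + d (k + 1) = 0) :
    (∑ i ∈ Icc 1 (2 * k), d i) ^ 2 ≤ (k - 1) * ∑ i ∈ Icc 1 (2 * k), d i ^ 2 := by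
  have hcard : ((k - 1 : ℕ) : ℝ) = k - 1 := Nat.cast_pred hk
  have hk₀ : (0 : ℝ) ≤ k - 1 := hcard ▸ Nat.cast_nonneg _
  have hlow_sq := sq_sum_le_card_mul_sum_sq (s := Ico 1 k) (f := d)
  have hhigh_sq := sq_sum_le_card_mul_sum_sq (s := Ioc (k + 1) (2 * k)) (f := d)
  rw [Nat.card_Ico, hcard] at hlow_sq
  rw [Nat.card_Ioc, show 2 * k - (k + 1) = k - 1 by omega, hcard] at hhigh_sq
  rw [sum_Icc_one_two_mul_eq k hk, sum_Icc_one_two_mul_eq k hk, hmid, add_zero]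
  calc (∑ i ∈ Ico 1 k, d i + ∑ i ∈ Ioc (k + 1) (2 * k), d i) ^ 2
      ≤ (∑ i ∈ Ico 1 k, d i) ^ 2 + (∑ i ∈ Ioc (k + 1) (2 * k), d i) ^ 2 :=
        sq_add_le_sq_add_sq (sum_nonpos hlow) (sum_nonneg hhigh)
    _ ≤ (k - 1) * (∑ i ∈ Ico 1 k, d i ^ 2 + ∑ i ∈ Ioc (k + 1) (2 * k), d i ^ 2) := by
        linarith
    _ ≤ _ := by
        gcongr
        linarith [sq_nonneg (d k), sq_nonneg (d (k + 1))]

theorem stmt_6_general (k n : ℕ) (hk : 2 ≤ k) (hn : n = 2 * k) (x : ℕ → ℝ)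
    (hmono : ∀ i j, 1 ≤ i → i ≤ j → j ≤ n → x i ≤ x j) :
    |(x k + x (k + 1)) / 2 - (∑ i ∈ Icc 1 n, x i) / n| /
      Real.sqrt ((∑ i ∈ Icc 1 n, (x i - (∑ j ∈ Icc 1 n, x j) / n) ^ 2) / n) ≤
      Real.sqrt (((k : ℝ) - 1) / (k + 1)) := by
  subst hn
  have hcard : ((#(Icc 1 (2 * k)) : ℕ) : ℝ) = 2 * k := by simp
  have hmid : x k ≤ x (k + 1) := hmono k (k + 1) (by omega) (by omega) (by omega)
  have hkey := sq_sum_Icc_two_mul_le_of_nonpos_of_nonneg k (by omega)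
    (fun i => x i - (x k + x (k + 1)) / 2)
    (fun i hi => by
      have := hmono i k (mem_Ico.1 hi).1 (mem_Ico.1 hi).2.le (by omega)
      linarith)
    (fun i hi => by
      have := hmono (k + 1) i (by omega) (mem_Ioc.1 hi).1.le (mem_Ioc.1 hi).2
      linarith)
    (by ring)
  have hbound := abs_sub_mean_div_stdDev_le (Icc 1 (2 * k)) x
    (sub_nonneg.2 (by exact_mod_cast (by omega : 1 ≤ k))) (by rw [hcard]; linarith) hkey
  rw [hcard, show (2 * k : ℝ) - (k - 1) = k + 1 by ring] at hbound
  exact_mod_cast hbound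

theorem stmt_6 (k n : ℕ) (hk : 2 ≤ k) (hn : n = 2 * k) (x : ℕ → ℝ)
    (hmono : ∀ i j, 1 ≤ i → i ≤ j → j ≤ n → x i ≤ x j)
    (hlt : x 1 < x n) :
    |(x k + x (k + 1)) / 2 - (∑ i ∈ Icc 1 n, x i) / n| /
      Real.sqrt ((∑ i ∈ Icc 1 n, (x i - (∑ j ∈ Icc 1 n, x j) / n) ^ 2) / n) ≤
      Real.sqrt (((k : ℝ) - 1) / (k + 1)) :=
  stmt_6_general k n hk hn x hmono
end

section
/- Let n = 2k+1 and consider the data with x_1 = ... = x_k = -sqrt((k+1)/k) and x_{k+1} = ... = x_{2k+1} = sqrt(k/(k+1)). Then the mean is 0, the population variance is 1, and the median equals sqrt(k/(k+1)); hence the bound sqrt(k/(k+1)) in the odd-sample Hotelling–Solomons inequality is attained. -/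
/-!
Since `k · √((k+1)/k) = √(k(k+1)) = (k+1) · √(k/(k+1))`, the `k` negative values cancel the
`k + 1` positive ones, so the mean is `0`. The variance is then the mean of the squares,
`(k · (k+1)/k + (k+1) · k/(k+1)) / (2k+1) = 1`, and the median `x (k+1)` is one of the
positive values.
-/

open Finset

lemma Real.mul_sqrt_div_self {a : ℝ} (ha : 0 ≤ a) (b : ℝ) : a * √(b / a) = √(a * b) := by
  rcases ha.eq_or_lt with rfl | ha
  · simp
  · rw [← Real.sqrt_sq ha.le, ← Real.sqrt_mul (sq_nonneg a), Real.sqrt_sq ha.le]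
    congr 1
    field_simp

lemma sum_Icc_one_eq_nsmul_add_nsmul {M : Type*} [AddCommMonoid M] {k n : ℕ} (hkn : k ≤ n)
    {f : ℕ → M} {a b : M} (ha : ∀ i, 1 ≤ i → i ≤ k → f i = a)
    (hb : ∀ i, k + 1 ≤ i → i ≤ n → f i = b) :
    ∑ i ∈ Icc 1 n, f i = k • a + (n - k) • b := by
  rw [← zero_add 1, Icc_add_one_left_eq_Ioc, ← sum_Ioc_consecutive f (Nat.zero_le k) hkn,
    sum_congr rfl fun i hi => ha i (mem_Ioc.1 hi).1 (mem_Ioc.1 hi).2,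
    sum_congr rfl fun i hi => hb i (mem_Ioc.1 hi).1 (mem_Ioc.1 hi).2]
  simp

theorem stmt_7 (k n : ℕ) (hk : 1 ≤ k) (hn : n = 2 * k + 1) (x : ℕ → ℝ)
    (hlow : ∀ i, 1 ≤ i → i ≤ k → x i = -Real.sqrt (((k : ℝ) + 1) / k))
    (hhigh : ∀ i, k + 1 ≤ i → i ≤ 2 * k + 1 → x i = Real.sqrt ((k : ℝ) / (k + 1))) :
    (∑ i ∈ Icc 1 n, x i) / n = 0 ∧
    (∑ i ∈ Icc 1 n, (x i - (∑ j ∈ Icc 1 n, x j) / n) ^ 2) / n = 1 ∧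
    x (k + 1) = Real.sqrt ((k : ℝ) / (k + 1)) := by
  subst hn
  have hk₀ : (0 : ℝ) < k := by exact_mod_cast hk
  have hcard : 2 * k + 1 - k = k + 1 := by omega
  have hsum : ∑ i ∈ Icc 1 (2 * k + 1), x i = 0 := by
    rw [sum_Icc_one_eq_nsmul_add_nsmul (by omega) hlow hhigh, hcard, nsmul_eq_mul, nsmul_eq_mul,
      mul_neg, Real.mul_sqrt_div_self hk₀.le]
    push_cast
    rw [Real.mul_sqrt_div_self (by positivity), mul_comm]
    ring
  have hsq : ∑ i ∈ Icc 1 (2 * k + 1), x i ^ 2 = 2 * k + 1 := by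
    rw [sum_Icc_one_eq_nsmul_add_nsmul (a := ((k : ℝ) + 1) / k) (b := (k : ℝ) / (k + 1))
      (k := k) (n := 2 * k + 1) (by omega)
      (fun i h₁ h₂ => by rw [hlow i h₁ h₂, neg_sq, Real.sq_sqrt (by positivity)])
      (fun i h₁ h₂ => by rw [hhigh i h₁ h₂, Real.sq_sqrt (by positivity)]), hcard,
      nsmul_eq_mul, nsmul_eq_mul]
    push_cast
    rw [mul_div_cancel₀ _ hk₀.ne', mul_div_cancel₀ _ (by positivity)]
    ring
  refine ⟨by simp [hsum], ?_, hhigh (k + 1) le_rfl (by omega)⟩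
  simp only [hsum, zero_div, sub_zero, hsq]
  push_cast
  exact div_self (by positivity)
end

section
/- Let n = 2k+1 and consider the data with x_1 = ... = x_{k+1} = -sqrt(k/(k+1)) and x_{k+2} = ... = x_{2k+1} = sqrt((k+1)/k). Then the mean is 0, the population variance is 1, and the median equals -sqrt(k/(k+1)); hence (med x - x̄)/s = -sqrt(k/(k+1)). -/
/-! With `a = √(k/(k+1))` and `b = √((k+1)/k)` we have `(k+1) a = k b = √(k(k+1))`, so the
`k+1` low values and `k` high values balance to mean `0`, and `(k+1) a² + k b² = k + (k+1) = n`
gives variance `1`. The median is one of the low values, so the standardized median is `-a`. -/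

open Finset

lemma mul_sqrt_div_self_eq_sqrt_mul {p : ℝ} (hp : 0 ≤ p) (q : ℝ) :
    p * Real.sqrt (q / p) = Real.sqrt (p * q) := by
  rcases hp.eq_or_lt with rfl | hp
  · simp
  rw [← Real.sqrt_sq hp.le, ← Real.sqrt_mul (sq_nonneg p), Real.sqrt_sq hp.le]
  field_simp

lemma two_point_sum_eq_zero {p q : ℝ} (hp : 0 ≤ p) (hq : 0 ≤ q) :
    p * -Real.sqrt (q / p) + q * Real.sqrt (p / q) = 0 := by
  rw [mul_neg, mul_sqrt_div_self_eq_sqrt_mul hp, mul_sqrt_div_self_eq_sqrt_mul hq, mul_comm q,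
    neg_add_cancel]

lemma two_point_sum_sq {p q : ℝ} (hp : 0 < p) (hq : 0 < q) :
    p * (-Real.sqrt (q / p)) ^ 2 + q * Real.sqrt (p / q) ^ 2 = p + q := by
  rw [neg_sq, Real.sq_sqrt (by positivity), Real.sq_sqrt (by positivity),
    mul_div_cancel₀ _ hp.ne', mul_div_cancel₀ _ hq.ne', add_comm]

lemma sum_Icc_of_two_constant_blocks {M : Type*} [AddCommMonoid M] (g : ℕ → M) {p q : ℕ}
    {a b : M} (ha : ∀ i, 1 ≤ i → i ≤ p → g i = a) (hb : ∀ i, p + 1 ≤ i → i ≤ p + q → g i = b) :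
    ∑ i ∈ Icc 1 (p + q), g i = p • a + q • b := by
  rw [show Icc 1 (p + q) = Ioc 0 (p + q) from Icc_add_one_left_eq_Ioc 0 _,
    ← sum_Ioc_consecutive g (Nat.zero_le p) (Nat.le_add_right p q),
    sum_congr rfl fun i hi => ha i (mem_Ioc.1 hi).1 (mem_Ioc.1 hi).2,
    sum_congr rfl fun i hi => hb i (mem_Ioc.1 hi).1 (mem_Ioc.1 hi).2]
  simp

theorem stmt_8 (k n : ℕ) (hk : 1 ≤ k) (hn : n = 2 * k + 1) (x : ℕ → ℝ)
    (hlow : ∀ i, 1 ≤ i → i ≤ k + 1 → x i = -Real.sqrt ((k : ℝ) / (k + 1)))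
    (hhigh : ∀ i, k + 2 ≤ i → i ≤ 2 * k + 1 → x i = Real.sqrt (((k : ℝ) + 1) / k)) :
    (∑ i ∈ Icc 1 n, x i) / n = 0 ∧
    (∑ i ∈ Icc 1 n, (x i - (∑ j ∈ Icc 1 n, x j) / n) ^ 2) / n = 1 ∧
    x (k + 1) = -Real.sqrt ((k : ℝ) / (k + 1)) ∧
    (x (k + 1) - (∑ i ∈ Icc 1 n, x i) / n) /
      Real.sqrt ((∑ i ∈ Icc 1 n, (x i - (∑ j ∈ Icc 1 n, x j) / n) ^ 2) / n) =
      -Real.sqrt ((k : ℝ) / (k + 1)) := by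
  have hk0 : (0 : ℝ) < k := by exact_mod_cast hk
  have hn' : n = (k + 1) + k := by omega
  have hhigh' : ∀ i, k + 1 + 1 ≤ i → i ≤ k + 1 + k → x i = Real.sqrt (((k : ℝ) + 1) / k) :=
    fun i h₁ h₂ => hhigh i h₁ (by omega)
  have hsum : ∑ i ∈ Icc 1 n, x i = 0 := by
    rw [hn', sum_Icc_of_two_constant_blocks x hlow hhigh', nsmul_eq_mul, nsmul_eq_mul]
    push_cast
    exact two_point_sum_eq_zero (by positivity) hk0.le
  have hsum_sq : ∑ i ∈ Icc 1 n, x i ^ 2 = n := by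
    rw [hn', sum_Icc_of_two_constant_blocks (x · ^ 2) (fun i h₁ h₂ => by rw [hlow i h₁ h₂])
      (fun i h₁ h₂ => by rw [hhigh' i h₁ h₂]), nsmul_eq_mul, nsmul_eq_mul]
    push_cast
    exact two_point_sum_sq (by positivity) hk0
  have hmedian := hlow (k + 1) le_add_self le_rfl
  have hvar : (∑ i ∈ Icc 1 n, x i ^ 2) / n = 1 := by
    rw [hsum_sq, div_self (by rw [hn']; positivity)]
  simp only [hsum, zero_div, sub_zero, hvar, Real.sqrt_one, div_one]
  exact ⟨trivial, trivial, hmedian, hmedian⟩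
end

section
/- Let n = 2k and consider the data with x_1 = ... = x_{k-1} = -sqrt((k+1)/(k-1)) and x_k = x_{k+1} = ... = x_{2k} = sqrt((k-1)/(k+1)). Then the mean is 0, the population variance is 1, and (x_k + x_{k+1})/2 = sqrt((k-1)/(k+1)); hence the even-sample bound sqrt((k-1)/(k+1)) is attained. -/
open Finset

theorem stmt_9 (k n : ℕ) (hk : 2 ≤ k) (hn : n = 2 * k) (x : ℕ → ℝ)
    (hlow : ∀ i, 1 ≤ i → i ≤ k - 1 → x i = -Real.sqrt (((k : ℝ) + 1) / ((k : ℝ) - 1)))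
    (hhigh : ∀ i, k ≤ i → i ≤ 2 * k → x i = Real.sqrt (((k : ℝ) - 1) / (k + 1))) :
    (∑ i ∈ Icc 1 n, x i) / n = 0 ∧
    (∑ i ∈ Icc 1 n, (x i - (∑ j ∈ Icc 1 n, x j) / n) ^ 2) / n = 1 ∧
    (x k + x (k + 1)) / 2 = Real.sqrt (((k : ℝ) - 1) / (k + 1)) := by
  have hk2 : (2:ℝ) ≤ (k:ℝ) := by exact_mod_cast hk
  have hc0 : (0:ℝ) < (k:ℝ) - 1 := by linarith
  have hd0 : (0:ℝ) < (k:ℝ) + 1 := by linarith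
  set c := Real.sqrt ((k:ℝ) - 1) with hc
  set d := Real.sqrt ((k:ℝ) + 1) with hd
  have hcpos : 0 < c := Real.sqrt_pos.mpr hc0
  have hdpos : 0 < d := Real.sqrt_pos.mpr hd0
  have hc2 : c ^ 2 = (k:ℝ) - 1 := Real.sq_sqrt hc0.le
  have hd2 : d ^ 2 = (k:ℝ) + 1 := Real.sq_sqrt hd0.le
  have ha : Real.sqrt (((k : ℝ) + 1) / ((k : ℝ) - 1)) = d / c := Real.sqrt_div hd0.le _
  have hb : Real.sqrt (((k : ℝ) - 1) / ((k:ℝ) + 1)) = c / d := Real.sqrt_div hc0.le _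
  -- sum split
  have hsplit : ∀ f : ℕ → ℝ, ∑ i ∈ Icc 1 n, f i
      = ∑ i ∈ Ioc 0 (k-1), f i + ∑ i ∈ Ioc (k-1) (2*k), f i := by
    intro f
    rw [show (1:ℕ) = 0 + 1 from rfl, Finset.Icc_add_one_left_eq_Ioc, hn,
      Finset.sum_Ioc_consecutive f (Nat.zero_le _) (by omega)]
  have hlow' : ∀ i ∈ Ioc 0 (k-1), x i = -(d/c) := by
    intro i hi
    simp only [mem_Ioc] at hi
    rw [hlow i hi.1 hi.2, ha]
  have hhigh' : ∀ i ∈ Ioc (k-1) (2*k), x i = c/d := by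
    intro i hi
    simp only [mem_Ioc] at hi
    rw [hhigh i (by omega) hi.2, hb]
  have hcard1 : (Ioc 0 (k-1)).card = k - 1 := by rw [Nat.card_Ioc]; omega
  have hcard2 : (Ioc (k-1) (2*k)).card = k + 1 := by rw [Nat.card_Ioc]; omega
  have hcast1 : ((k - 1 : ℕ) : ℝ) = (k:ℝ) - 1 := by
    have : (1:ℕ) ≤ k := by omega
    push_cast [this]; ring
  have hsum : ∑ i ∈ Icc 1 n, x i = 0 := by
    rw [hsplit x, Finset.sum_congr rfl hlow', Finset.sum_congr rfl hhigh',
      Finset.sum_const, Finset.sum_const, hcard1, hcard2, nsmul_eq_mul, nsmul_eq_mul,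
      hcast1]
    push_cast
    field_simp
    nlinarith [hc2, hd2]
  have hsumsq : ∑ i ∈ Icc 1 n, (x i)^2 = (n:ℝ) := by
    rw [hsplit (fun i => (x i)^2)]
    have e1 : ∀ i ∈ Ioc 0 (k-1), (x i)^2 = (d/c)^2 := by
      intro i hi; rw [hlow' i hi]; ring
    have e2 : ∀ i ∈ Ioc (k-1) (2*k), (x i)^2 = (c/d)^2 := by
      intro i hi; rw [hhigh' i hi]
    rw [Finset.sum_congr rfl e1, Finset.sum_congr rfl e2,
      Finset.sum_const, Finset.sum_const, hcard1, hcard2, nsmul_eq_mul, nsmul_eq_mul,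
      hcast1, hn, div_pow, div_pow, hc2, hd2]
    push_cast
    field_simp
    ring
  have hnR : (0:ℝ) < (n:ℝ) := by rw [hn]; push_cast; linarith
  refine ⟨by rw [hsum]; simp, ?_, ?_⟩
  · rw [hsum]
    simp only [zero_div, sub_zero]
    rw [hsumsq]
    field_simp
  · rw [hhigh k le_rfl (by omega), hhigh (k+1) (by omega) (by omega)]
    ring
end

section
/- Let z_1, ..., z_n be reals with ∑z_i = 0 and ∑z_i² = n. Suppose z_i < 0 for 1 ≤ i ≤ ℓ, z_i > 0 for m+1 ≤ i ≤ n (with 1 ≤ ℓ ≤ m ≤ n-1), and z_i = 0 for ℓ < i ≤ m. Set a = -∑_{i=1}^ℓ z_i = ∑_{i=m+1}^n z_i. Then a² ≤ n²/(n/ℓ + n/(n-m)). -/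
/-!
By Cauchy–Schwarz on the negative block and on the positive block,
`a² ≤ ℓ · ∑_{i ≤ ℓ} zᵢ²` and `a² ≤ (n - m) · ∑_{i > m} zᵢ²`. The zero block contributes
nothing to `∑ zᵢ² = n`, so `a² (1/ℓ + 1/(n - m)) ≤ n`.
-/

open Finset

theorem le_sq_div_of_le_mul_of_le_mul {x p q A B N : ℝ} (hp : 0 < p) (hq : 0 < q)
    (hxA : x ≤ p * A) (hxB : x ≤ q * B) (hN : A + B ≤ N) :
    x ≤ N ^ 2 / (N / p + N / q) := by
  have hharm : x / p + x / q ≤ N := by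
    have h1 : x / p ≤ A := by rw [div_le_iff₀ hp]; linarith
    have h2 : x / q ≤ B := by rw [div_le_iff₀ hq]; linarith
    linarith
  rcases eq_or_ne N 0 with rfl | hN0
  · norm_num
    by_contra! hx
    linarith [div_pos hx hp, div_pos hx hq]
  · have hrw : N ^ 2 / (N / p + N / q) = N / (1 / p + 1 / q) := by field_simp
    rw [hrw, le_div_iff₀ (by positivity)]
    calc x * (1 / p + 1 / q) = x / p + x / q := by ring
      _ ≤ N := hharm

theorem sum_Icc_eq_add_of_eq_zero {M : Type*} [AddCommMonoid M] {f : ℕ → M} {ℓ m n : ℕ}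
    (hℓm : ℓ ≤ m) (hmn : m ≤ n) (hzero : ∀ i, ℓ < i → i ≤ m → f i = 0) :
    ∑ i ∈ Icc 1 n, f i = ∑ i ∈ Icc 1 ℓ, f i + ∑ i ∈ Icc (m + 1) n, f i := by
  have hmid : ∑ i ∈ Ioc ℓ m, f i = 0 :=
    sum_eq_zero fun i hi => hzero i (mem_Ioc.1 hi).1 (mem_Ioc.1 hi).2
  rw [Icc_add_one_left_eq_Ioc, ← zero_add 1, Icc_add_one_left_eq_Ioc, Icc_add_one_left_eq_Ioc,
    ← sum_Ioc_consecutive f (Nat.zero_le ℓ) (hℓm.trans hmn), ← sum_Ioc_consecutive f hℓm hmn,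
    hmid, zero_add]

theorem stmt_11_general (n : ℕ) (hn : 2 ≤ n) (z : ℕ → ℝ)
    (hsq : ∑ i ∈ Icc 1 n, z i ^ 2 = n)
    (ℓ m : ℕ) (hℓ : 1 ≤ ℓ) (hℓm : ℓ ≤ m) (hm : m ≤ n - 1)
    (hzero : ∀ i, ℓ < i → i ≤ m → z i = 0)
    (a : ℝ)
    (ha1 : a = -∑ i ∈ Icc 1 ℓ, z i)
    (ha2 : a = ∑ i ∈ Icc (m + 1) n, z i) :
    a ^ 2 ≤ (n : ℝ) ^ 2 / ((n : ℝ) / ℓ + (n : ℝ) / ((n - m : ℕ) : ℝ)) := by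
  have hmn : m < n := by omega
  have hsplit := sum_Icc_eq_add_of_eq_zero (f := fun i => z i ^ 2) hℓm hmn.le
    fun i hℓi him => by simp [hzero i hℓi him]
  have hleft : a ^ 2 ≤ ℓ * ∑ i ∈ Icc 1 ℓ, z i ^ 2 := by
    simpa [ha1] using sq_sum_le_card_mul_sum_sq (s := Icc 1 ℓ) (f := z)
  have hright : a ^ 2 ≤ ((n - m : ℕ) : ℝ) * ∑ i ∈ Icc (m + 1) n, z i ^ 2 := by
    simpa [← ha2] using sq_sum_le_card_mul_sum_sq (s := Icc (m + 1) n) (f := z)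
  exact le_sq_div_of_le_mul_of_le_mul (by positivity) (by simpa using hmn) hleft hright
    (hsplit ▸ hsq).le

theorem stmt_11 (n : ℕ) (hn : 2 ≤ n) (z : ℕ → ℝ)
    (hsum : ∑ i ∈ Icc 1 n, z i = 0)
    (hsq : ∑ i ∈ Icc 1 n, z i ^ 2 = n)
    (ℓ m : ℕ) (hℓ : 1 ≤ ℓ) (hℓm : ℓ ≤ m) (hm : m ≤ n - 1)
    (hneg : ∀ i, 1 ≤ i → i ≤ ℓ → z i < 0)
    (hpos : ∀ i, m + 1 ≤ i → i ≤ n → 0 < z i)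
    (hzero : ∀ i, ℓ < i → i ≤ m → z i = 0)
    (a : ℝ)
    (ha1 : a = -∑ i ∈ Icc 1 ℓ, z i)
    (ha2 : a = ∑ i ∈ Icc (m + 1) n, z i) :
    a ^ 2 ≤ (n : ℝ) ^ 2 / ((n : ℝ) / ℓ + (n : ℝ) / ((n - m : ℕ) : ℝ)) :=
  stmt_11_general n hn z hsq ℓ m hℓ hℓm hm hzero a ha1 ha2
end

section
/- Let z_1 ≤ ... ≤ z_n be reals with ∑z_i = 0 and ∑z_i² = n, where n = 2k+1, k ≥ 1. If z_{k+1} > 0, then ∑_{i=k+1}^n z_i ≥ (k+1) z_{k+1} and z_{k+1} ≤ sqrt(k/(k+1)). -/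
/-!
Put `m = z_{k+1}`. The upper half `z_{k+1}, …, z_n` has `k + 1` terms, each at least `m`, so its sum
`B` is at least `(k + 1) m` and its sum of squares at least `(k + 1) m²`. The lower half
`z_1, …, z_k` sums to `-B`, so by Cauchy–Schwarz `k` times its sum of squares is at least
`B² ≥ (k + 1)² m²`. Adding the two halves, `k n ≥ (k + 1) n m²`.
-/

open Finset

section

variable {ι R : Type*} [CommRing R] [LinearOrder R] [IsStrictOrderedRing R]

theorem card_mul_card_add_card_mul_sq_le {s t : Finset ι} {f : ι → R} {m : R} (hm : 0 ≤ m)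
    (ht : ∀ i ∈ t, m ≤ f i) (hsum : ∑ i ∈ s, f i + ∑ i ∈ t, f i = 0) :
    #t * (#s + #t) * m ^ 2 ≤ #s * (∑ i ∈ s, f i ^ 2 + ∑ i ∈ t, f i ^ 2) := by
  have hlin : #t * m ≤ ∑ i ∈ t, f i := by
    simpa [nsmul_eq_mul] using card_nsmul_le_sum t f m ht
  have hsq_t : #t * m ^ 2 ≤ ∑ i ∈ t, f i ^ 2 := by
    simpa [nsmul_eq_mul] using
      card_nsmul_le_sum t (f · ^ 2) (m ^ 2) fun i hi ↦ pow_le_pow_left₀ hm (ht i hi) 2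
  have hsq_s : (∑ i ∈ t, f i) ^ 2 ≤ #s * ∑ i ∈ s, f i ^ 2 := by
    simpa [eq_neg_of_add_eq_zero_left hsum] using sq_sum_le_card_mul_sum_sq (s := s) (f := f)
  calc (#t * (#s + #t) * m ^ 2 : R)
      = (#t * m) ^ 2 + #s * (#t * m ^ 2) := by ring
    _ ≤ (∑ i ∈ t, f i) ^ 2 + #s * ∑ i ∈ t, f i ^ 2 := by gcongr
    _ ≤ #s * (∑ i ∈ s, f i ^ 2 + ∑ i ∈ t, f i ^ 2) := by linarith

end

theorem stmt_12_general (k n : ℕ) (hn : n = 2 * k + 1) (z : ℕ → ℝ)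
    (hmono : ∀ i j, 1 ≤ i → i ≤ j → j ≤ n → z i ≤ z j)
    (hsum : ∑ i ∈ Icc 1 n, z i = 0)
    (hsq : ∑ i ∈ Icc 1 n, z i ^ 2 = n)
    (hpos : 0 < z (k + 1)) :
    ((k : ℝ) + 1) * z (k + 1) ≤ ∑ i ∈ Icc (k + 1) n, z i ∧
    z (k + 1) ≤ Real.sqrt ((k : ℝ) / (k + 1)) := by
  have hupper : ∀ i ∈ Icc (k + 1) n, z (k + 1) ≤ z i := fun i hi ↦
    hmono _ _ (by omega) (mem_Icc.1 hi).1 (mem_Icc.1 hi).2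
  have hcard_upper : #(Icc (k + 1) n) = k + 1 := by simp; omega
  have hsplit : Icc 1 n = Icc 1 k ∪ Icc (k + 1) n := by ext; simp only [mem_union, mem_Icc]; omega
  have hdisj : Disjoint (Icc 1 k) (Icc (k + 1) n) := disjoint_left.2 fun _ ha hb ↦ by
    simp only [mem_Icc] at ha hb; omega
  refine ⟨?_, ?_⟩
  · simpa [hcard_upper, nsmul_eq_mul] using card_nsmul_le_sum _ z _ hupper
  · have key := card_mul_card_add_card_mul_sq_le hpos.le hupper
      (by rwa [← sum_union hdisj, ← hsplit])
    rw [← sum_union hdisj, ← hsplit, hsq, hcard_upper, Nat.card_Icc, hn] at key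
    push_cast at key
    refine Real.le_sqrt_of_sq_le ((le_div_iff₀ (by positivity)).2 ?_)
    nlinarith

theorem stmt_12 (k n : ℕ) (hk : 1 ≤ k) (hn : n = 2 * k + 1) (z : ℕ → ℝ)
    (hmono : ∀ i j, 1 ≤ i → i ≤ j → j ≤ n → z i ≤ z j)
    (hsum : ∑ i ∈ Icc 1 n, z i = 0)
    (hsq : ∑ i ∈ Icc 1 n, z i ^ 2 = n)
    (hpos : 0 < z (k + 1)) :
    ((k : ℝ) + 1) * z (k + 1) ≤ ∑ i ∈ Icc (k + 1) n, z i ∧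
    z (k + 1) ≤ Real.sqrt ((k : ℝ) / (k + 1)) :=
  stmt_12_general k n hn z hmono hsum hsq hpos
end

section
/- Let z_1 ≤ ... ≤ z_n be reals with ∑z_i = 0 and ∑z_i² = n, where n = 2k, k ≥ 2. If 0 < z_k ≤ z_{k+1}, then (z_k + z_{k+1})/2 ≤ sqrt((k-1)/(k+1)). -/
/-!
Let `S` be the sum of the `k + 1` largest terms `z_k, …, z_{2k}`; the `k - 1` smallest terms then
sum to `-S`. Cauchy–Schwarz on each block gives `2k = ∑ z_i² ≥ S²/(k-1) + S²/(k+1)`, i.e.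
`S² ≤ k² - 1`, while monotonicity gives `S ≥ z_k + k z_{k+1} ≥ (k+1)(z_k + z_{k+1})/2`.
-/

open Finset

theorem card_add_card_mul_sq_sum_le_of_sum_union_eq_zero {ι R : Type*} [CommRing R] [LinearOrder R]
    [IsStrictOrderedRing R] [DecidableEq ι] {s t : Finset ι} {f : ι → R} (hst : Disjoint s t)
    (hf : ∑ i ∈ s ∪ t, f i = 0) :
    (#s + #t : R) * (∑ i ∈ t, f i) ^ 2 ≤ #s * #t * ∑ i ∈ s ∪ t, f i ^ 2 := by
  rw [sum_union hst] at hf ⊢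
  have hs : (∑ i ∈ t, f i) ^ 2 ≤ #s * ∑ i ∈ s, f i ^ 2 := by
    rw [← neg_sq, ← eq_neg_of_add_eq_zero_left hf]
    exact sq_sum_le_card_mul_sum_sq
  have ht : (∑ i ∈ t, f i) ^ 2 ≤ #t * ∑ i ∈ t, f i ^ 2 := sq_sum_le_card_mul_sum_sq
  linear_combination mul_le_mul_of_nonneg_left hs (Nat.cast_nonneg (α := R) #t) +
    mul_le_mul_of_nonneg_left ht (Nat.cast_nonneg (α := R) #s)

theorem succ_mul_midpoint_le_sum_Icc {z : ℕ → ℝ} {k j : ℕ} (hj : 1 ≤ j)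
    (hz : MonotoneOn z (Set.Icc k (k + j))) :
    (j + 1) * ((z k + z (k + 1)) / 2) ≤ ∑ i ∈ Icc k (k + j), z i := by
  have hmem {i : ℕ} (h₁ : k ≤ i) (h₂ : i ≤ k + j) : i ∈ Set.Icc k (k + j) := ⟨h₁, h₂⟩
  have hstep : z k ≤ z (k + 1) := hz (hmem le_rfl (by omega)) (hmem (by omega) (by omega)) (by omega)
  have htail : j * z (k + 1) ≤ ∑ i ∈ Icc (k + 1) (k + j), z i := by
    have := card_nsmul_le_sum (Icc (k + 1) (k + j)) z (z (k + 1)) fun i hi => by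
      rw [mem_Icc] at hi
      exact hz (hmem (by omega) (by omega)) (hmem (by omega) hi.2) hi.1
    simpa using this
  rw [← insert_Icc_add_one_left_eq_Icc (by omega), sum_insert (by simp)]
  nlinarith [mul_le_mul_of_nonneg_left hstep (sub_nonneg.2 (by exact_mod_cast hj : (1 : ℝ) ≤ j))]

theorem stmt_13_general (k n : ℕ) (hk : 2 ≤ k) (hn : n = 2 * k) (z : ℕ → ℝ)
    (hmono : ∀ i j, 1 ≤ i → i ≤ j → j ≤ n → z i ≤ z j)
    (hsum : ∑ i ∈ Icc 1 n, z i = 0)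
    (hsq : ∑ i ∈ Icc 1 n, z i ^ 2 = n) :
    (z k + z (k + 1)) / 2 ≤ Real.sqrt (((k : ℝ) - 1) / (k + 1)) := by
  subst hn
  set m := (z k + z (k + 1)) / 2
  set S := ∑ i ∈ Icc k (2 * k), z i with hSdef
  have hsplit : Icc 1 (k - 1) ∪ Icc k (2 * k) = Icc 1 (2 * k) := by
    ext i; simp only [mem_union, mem_Icc]; omega
  have hdisj : Disjoint (Icc 1 (k - 1)) (Icc k (2 * k)) := by
    simp only [disjoint_left, mem_Icc]; omega
  have hS : S ^ 2 ≤ (k - 1) * (k + 1) := by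
    have := card_add_card_mul_sq_sum_le_of_sum_union_eq_zero hdisj (hsplit ▸ hsum)
    rw [hsplit, hsq, Nat.card_Icc, Nat.card_Icc, show k - 1 + 1 - 1 = k - 1 by omega,
      show 2 * k + 1 - k = k + 1 by omega, Nat.cast_sub (by omega)] at this
    push_cast [← hSdef] at this
    have h2k : (2 * k : ℝ) * S ^ 2 ≤ 2 * k * ((k - 1) * (k + 1)) := by linear_combination this
    exact le_of_mul_le_mul_left h2k (by positivity)
  have hmS : (k + 1) * m ≤ S := by
    have := succ_mul_midpoint_le_sum_Icc (k := k) (j := k) (z := z) (by omega)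
      fun i hi j hj hij => hmono i j (by grind) hij (by grind)
    rwa [← two_mul] at this
  rcases le_or_gt m 0 with hm | hm
  · exact hm.trans (Real.sqrt_nonneg _)
  have hmS2 : ((k + 1) * m) ^ 2 ≤ S ^ 2 := pow_le_pow_left₀ (by positivity) hmS 2
  rw [Real.le_sqrt' hm, le_div_iff₀ (by positivity)]
  nlinarith

theorem stmt_13 (k n : ℕ) (hk : 2 ≤ k) (hn : n = 2 * k) (z : ℕ → ℝ)
    (hmono : ∀ i j, 1 ≤ i → i ≤ j → j ≤ n → z i ≤ z j)
    (hsum : ∑ i ∈ Icc 1 n, z i = 0)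
    (hsq : ∑ i ∈ Icc 1 n, z i ^ 2 = n)
    (hpos : 0 < z k) (hle : z k ≤ z (k + 1)) :
    (z k + z (k + 1)) / 2 ≤ Real.sqrt (((k : ℝ) - 1) / (k + 1)) :=
  stmt_13_general k n hk hn z hmono hsum hsq
end

section
/- Let z_1 ≤ ... ≤ z_n be reals with ∑z_i = 0 and ∑z_i² = n, where n = 2k, k ≥ 2. If z_{k+1} > -z_k ≥ 0, then (z_k + z_{k+1})/2 ≤ 1/2. -/
/-!
The upper half `S = z_{k+1} + ⋯ + z_{2k}` is minus the lower half, so Cauchy–Schwarz on both halves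
gives `2 S² ≤ k · ∑ zᵢ² = 2k²`, i.e. `S ≤ k`. As `z_{k+1}` is the least term of `S`, `z_{k+1} ≤ 1`,
and `z_k ≤ 0` finishes.
-/

open Finset

theorem sq_sum_mul_card_add_card_le {ι : Type*} (s t : Finset ι) (f : ι → ℝ)
    (h : ∑ i ∈ s, f i + ∑ i ∈ t, f i = 0) :
    (∑ i ∈ t, f i) ^ 2 * (#s + #t) ≤ #s * #t * (∑ i ∈ s, f i ^ 2 + ∑ i ∈ t, f i ^ 2) := by
  have hs := sq_sum_le_card_mul_sum_sq (s := s) (f := f)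
  have ht := sq_sum_le_card_mul_sum_sq (s := t) (f := f)
  rw [eq_neg_of_add_eq_zero_left h, neg_sq] at hs
  have hs' := mul_le_mul_of_nonneg_left hs (Nat.cast_nonneg (α := ℝ) #t)
  have ht' := mul_le_mul_of_nonneg_left ht (Nat.cast_nonneg (α := ℝ) #s)
  linarith

theorem stmt_14_general (k n : ℕ) (hk : 2 ≤ k) (hn : n = 2 * k) (z : ℕ → ℝ)
    (hmono : ∀ i j, 1 ≤ i → i ≤ j → j ≤ n → z i ≤ z j)
    (hsum : ∑ i ∈ Icc 1 n, z i = 0)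
    (hsq : ∑ i ∈ Icc 1 n, z i ^ 2 = n)
    (h2 : 0 ≤ -z k) :
    (z k + z (k + 1)) / 2 ≤ 1 / 2 := by
  subst hn
  have hk0 : (0 : ℝ) < k := by positivity
  have hIoc : Icc 1 (2 * k) = Ioc 0 (2 * k) := Icc_add_one_left_eq_Ioc 0 _
  rw [hIoc, ← sum_Ioc_consecutive _ (Nat.zero_le k) (by omega)] at hsum hsq
  have hcard : #(Ioc k (2 * k)) = k := by rw [Nat.card_Ioc]; omega
  have hS : (∑ i ∈ Ioc k (2 * k), z i) ^ 2 ≤ (k : ℝ) ^ 2 := by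
    have hcs := sq_sum_mul_card_add_card_le _ _ z hsum
    simp only [Nat.card_Ioc, Nat.sub_zero, hcard, hsq] at hcs
    push_cast at hcs
    nlinarith
  have hmin : k * z (k + 1) ≤ ∑ i ∈ Ioc k (2 * k), z i := by
    have hle := card_nsmul_le_sum (Ioc k (2 * k)) z (z (k + 1)) fun i hi ↦ by
      rw [mem_Ioc] at hi
      exact hmono _ _ (by omega) (by omega) hi.2
    rwa [hcard, nsmul_eq_mul] at hle
  have hz : z (k + 1) ≤ 1 := by nlinarith [abs_le_of_sq_le_sq' hS hk0.le]
  linarith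

theorem stmt_14 (k n : ℕ) (hk : 2 ≤ k) (hn : n = 2 * k) (z : ℕ → ℝ)
    (hmono : ∀ i j, 1 ≤ i → i ≤ j → j ≤ n → z i ≤ z j)
    (hsum : ∑ i ∈ Icc 1 n, z i = 0)
    (hsq : ∑ i ∈ Icc 1 n, z i ^ 2 = n)
    (h1 : -z k < z (k + 1)) (h2 : 0 ≤ -z k) :
    (z k + z (k + 1)) / 2 ≤ 1 / 2 :=
  stmt_14_general k n hk hn z hmono hsum hsq h2
end

section
/- Let x_1 ≤ ... ≤ x_n be reals with x_1 < x_n, mean x̄ and population standard deviation s > 0. Then for each i, -sqrt((n-i)/i) ≤ (x_i - x̄)/s ≤ sqrt((i-1)/(n+1-i)). -/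
/-!
Write `d j = x j - x̄`, so that `∑ d j = 0` and `∑ d j ^ 2 = n s²`. For the upper bound, the
`n + 1 - i` deviations `d i, …, d n` are all at least `d i`; when `d i ≥ 0` their sum is at least
`(n + 1 - i) d i`, and it equals minus the sum of the remaining `i - 1` deviations. Cauchy–Schwarz
on those `i - 1` terms, together with the bound `(n + 1 - i) (d i)²` on the sum of squares of the
large ones, gives `(d i)² ≤ (i - 1) / (n + 1 - i) · s²`. The lower bound is the same argument
applied to `-d`, with the split after index `i`.
-/

open Finset

section DeviationBounds

variable {ι : Type*} (A B : Finset ι) {f : ι → ℝ} {v σ : ℝ}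

theorem card_mul_card_add_card_mul_sq_le_s15 (hsum : ∑ j ∈ A, f j + ∑ j ∈ B, f j = 0)
    (hv : 0 ≤ v) (hvB : ∀ j ∈ B, v ≤ f j) :
    (#B : ℝ) * (#A + #B) * v ^ 2 ≤ #A * (∑ j ∈ A, f j ^ 2 + ∑ j ∈ B, f j ^ 2) := by
  have hB : (#B : ℝ) * v ≤ ∑ j ∈ B, f j := by
    simpa using card_nsmul_le_sum B f v hvB
  have hB_sq : (#B : ℝ) * v ^ 2 ≤ ∑ j ∈ B, f j ^ 2 := by
    simpa using card_nsmul_le_sum B (f · ^ 2) (v ^ 2) fun j hj ↦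
      pow_le_pow_left₀ hv (hvB j hj) 2
  have hA : ((#B : ℝ) * v) ^ 2 ≤ #A * ∑ j ∈ A, f j ^ 2 :=
    calc ((#B : ℝ) * v) ^ 2 ≤ (∑ j ∈ B, f j) ^ 2 := pow_le_pow_left₀ (by positivity) hB 2
      _ = (∑ j ∈ A, f j) ^ 2 := by rw [eq_neg_of_add_eq_zero_right hsum, neg_sq]
      _ ≤ #A * ∑ j ∈ A, f j ^ 2 := sq_sum_le_card_mul_sum_sq
  nlinarith [mul_le_mul_of_nonneg_left hB_sq (Nat.cast_nonneg (α := ℝ) #A)]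

variable {A B}

theorem le_sqrt_card_div_card_mul (hB : B.Nonempty) (hσ : 0 ≤ σ)
    (hsum : ∑ j ∈ A, f j + ∑ j ∈ B, f j = 0)
    (hsq : ∑ j ∈ A, f j ^ 2 + ∑ j ∈ B, f j ^ 2 = (#A + #B) * σ ^ 2)
    (hvB : ∀ j ∈ B, v ≤ f j) :
    v ≤ √(#A / #B) * σ := by
  rcases lt_or_ge v 0 with hv | hv
  · exact hv.le.trans (by positivity)
  have hB₀ : (0 : ℝ) < #B := by exact_mod_cast hB.card_pos
  have hAB : (0 : ℝ) < #A + #B := by positivity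
  have key := card_mul_card_add_card_mul_sq_le_s15 A B hsum hv hvB
  rw [hsq] at key
  have hv_sq : v ^ 2 ≤ #A / #B * σ ^ 2 := by
    rw [div_mul_eq_mul_div, le_div_iff₀ hB₀]
    nlinarith
  calc v = √(v ^ 2) := (Real.sqrt_sq hv).symm
    _ ≤ √(#A / #B * σ ^ 2) := Real.sqrt_le_sqrt hv_sq
    _ = √(#A / #B) * σ := by rw [Real.sqrt_mul (by positivity), Real.sqrt_sq hσ]

theorem neg_sqrt_card_div_card_mul_le (hB : B.Nonempty) (hσ : 0 ≤ σ)
    (hsum : ∑ j ∈ A, f j + ∑ j ∈ B, f j = 0)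
    (hsq : ∑ j ∈ A, f j ^ 2 + ∑ j ∈ B, f j ^ 2 = (#A + #B) * σ ^ 2)
    (hvB : ∀ j ∈ B, f j ≤ v) :
    -(√(#A / #B) * σ) ≤ v := by
  have := le_sqrt_card_div_card_mul (A := A) (f := -f) (v := -v) hB hσ
    (by simp only [Pi.neg_apply, sum_neg_distrib]; linarith)
    (by simpa only [Pi.neg_apply, neg_sq] using hsq)
    (fun j hj ↦ neg_le_neg (hvB j hj))
  linarith

end DeviationBounds

theorem sum_Icc_one_eq_sum_Ico_add_sum_Ico {M : Type*} [AddCommMonoid M] (f : ℕ → M)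
    {n k : ℕ} (hk : 1 ≤ k) (hkn : k ≤ n + 1) :
    ∑ j ∈ Icc 1 n, f j = ∑ j ∈ Ico 1 k, f j + ∑ j ∈ Ico k (n + 1), f j := by
  rw [sum_Ico_consecutive f hk hkn, Ico_add_one_right_eq_Icc]

theorem stmt_15_general (n : ℕ) (x : ℕ → ℝ)
    (hmono : ∀ i j, 1 ≤ i → i ≤ j → j ≤ n → x i ≤ x j)
    (s : ℝ)
    (hs : s = Real.sqrt ((∑ i ∈ Icc 1 n, (x i - (∑ j ∈ Icc 1 n, x j) / n) ^ 2) / n)) :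
    ∀ i, 1 ≤ i → i ≤ n →
      -Real.sqrt (((n - i : ℕ) : ℝ) / i) ≤ (x i - (∑ j ∈ Icc 1 n, x j) / n) / s ∧
      (x i - (∑ j ∈ Icc 1 n, x j) / n) / s ≤ Real.sqrt (((i - 1 : ℕ) : ℝ) / ((n + 1 - i : ℕ) : ℝ)) := by
  intro i hi hin
  set m := (∑ j ∈ Icc 1 n, x j) / n
  have hn : (n : ℝ) ≠ 0 := by norm_cast; omega
  have hs₀ : 0 ≤ s := hs ▸ Real.sqrt_nonneg _
  have hsum : ∑ j ∈ Icc 1 n, (x j - m) = 0 := by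
    rw [sum_sub_distrib, sum_const, Nat.card_Icc, Nat.add_sub_cancel, nsmul_eq_mul,
      mul_div_cancel₀ _ hn, sub_self]
  have hsq : ∑ j ∈ Icc 1 n, (x j - m) ^ 2 = n * s ^ 2 := by
    rw [hs, Real.sq_sqrt (by positivity), mul_div_cancel₀ _ hn]
  have split k (hk : 1 ≤ k) (hkn : k ≤ n + 1) (g : ℕ → ℝ) :=
    sum_Icc_one_eq_sum_Ico_add_sum_Ico g hk hkn
  constructor
  · have hlow := neg_sqrt_card_div_card_mul_le (A := Ico (i + 1) (n + 1)) (B := Ico 1 (i + 1))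
      (v := x i - m) (nonempty_Ico.2 (by omega)) hs₀
      (by rw [add_comm, ← split _ (by omega) (by omega), hsum])
      (by rw [add_comm, ← split _ (by omega) (by omega), hsq, ← Nat.cast_add, Nat.card_Ico,
            Nat.card_Ico, show n + 1 - (i + 1) + (i + 1 - 1) = n by omega])
      (fun j hj ↦ by
        obtain ⟨hj₁, hji⟩ := mem_Ico.1 hj
        linarith [hmono j i hj₁ (by omega) hin])
    rw [Nat.card_Ico, Nat.card_Ico, Nat.add_sub_cancel, Nat.add_sub_add_right] at hlow
    rw [neg_le, ← neg_div]
    exact div_le_of_le_mul₀ hs₀ (Real.sqrt_nonneg _) (by linarith)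
  · have hup := le_sqrt_card_div_card_mul (A := Ico 1 i) (B := Ico i (n + 1))
      (v := x i - m) (nonempty_Ico.2 (by omega)) hs₀
      (by rw [← split _ hi (by omega), hsum])
      (by rw [← split _ hi (by omega), hsq, ← Nat.cast_add, Nat.card_Ico, Nat.card_Ico,
            show i - 1 + (n + 1 - i) = n by omega])
      (fun j hj ↦ by
        obtain ⟨hij, hjn⟩ := mem_Ico.1 hj
        linarith [hmono i j hi hij (by omega)])
    rw [Nat.card_Ico, Nat.card_Ico] at hup
    exact div_le_of_le_mul₀ hs₀ (Real.sqrt_nonneg _) hup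

theorem stmt_15 (n : ℕ) (hn : 2 ≤ n) (x : ℕ → ℝ)
    (hmono : ∀ i j, 1 ≤ i → i ≤ j → j ≤ n → x i ≤ x j)
    (hlt : x 1 < x n)
    (s : ℝ)
    (hs : s = Real.sqrt ((∑ i ∈ Icc 1 n, (x i - (∑ j ∈ Icc 1 n, x j) / n) ^ 2) / n))
    (hspos : 0 < s) :
    ∀ i, 1 ≤ i → i ≤ n →
      -Real.sqrt (((n - i : ℕ) : ℝ) / i) ≤ (x i - (∑ j ∈ Icc 1 n, x j) / n) / s ∧
      (x i - (∑ j ∈ Icc 1 n, x j) / n) / s ≤ Real.sqrt (((i - 1 : ℕ) : ℝ) / ((n + 1 - i : ℕ) : ℝ)) :=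
  stmt_15_general n x hmono s hs
end

section
/- Let x_1 ≤ ... ≤ x_n be reals with x_1 < x_n, mean x̄ and population standard deviation s > 0. Then 1/sqrt(n-1) ≤ (x_n - x̄)/s ≤ sqrt(n-1) and -sqrt(n-1) ≤ (x_1 - x̄)/s ≤ -1/sqrt(n-1). -/
/-!
Centre the data, `d i = x i - x̄`, so that `∑ d i = 0` and `∑ d i ^ 2 = n s²`.
Samuelson's inequality (Cauchy–Schwarz on the `n - 1` deviations other than `d k`, which sum
to `-d k`) gives `|d k| ≤ √(n - 1) s` for every `k`; this is the outer pair of bounds.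
Since every `d i` lies between `a = d 1 ≤ 0` and `b = d n ≥ 0`, summing
`(d i - a) (b - d i) ≥ 0` gives the Bhatia–Davis bound `s² ≤ -a b`, and with `-a ≤ √(n - 1) s`
this yields `s ≤ √(n - 1) b`, the inner bound. The bounds for `x 1` are those for `x n`
applied to the reflected data `-d`.
-/

open Finset

namespace Finset

variable {ι : Type*} {s : Finset ι} {d : ι → ℝ}

theorem card_mul_sq_le_of_sum_eq_zero (hsum : ∑ i ∈ s, d i = 0) {k : ι} (hk : k ∈ s) :
    #s * d k ^ 2 ≤ (#s - 1) * ∑ i ∈ s, d i ^ 2 := by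
  classical
  have hrest : ∑ i ∈ s.erase k, d i = -d k := by
    linarith [sum_erase_add s d hk]
  have hcard : ((#(s.erase k) : ℕ) : ℝ) = #s - 1 := by
    rw [card_erase_of_mem hk, Nat.cast_pred (card_pos.mpr ⟨k, hk⟩)]
  have hcs := sq_sum_le_card_mul_sum_sq (s := s.erase k) (f := d)
  rw [hrest, hcard, neg_sq] at hcs
  rw [← sum_erase_add s (fun i => d i ^ 2) hk]
  linarith

theorem abs_le_sqrt_card_sub_one_mul (hsum : ∑ i ∈ s, d i = 0) {σ : ℝ} (hσ : 0 ≤ σ)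
    (hvar : #s * σ ^ 2 = ∑ i ∈ s, d i ^ 2) {k : ι} (hk : k ∈ s) :
    |d k| ≤ √(#s - 1) * σ := by
  have hcard : (0 : ℝ) < #s := by exact_mod_cast card_pos.mpr ⟨k, hk⟩
  have hsq : d k ^ 2 ≤ (#s - 1) * σ ^ 2 := by
    have := card_mul_sq_le_of_sum_eq_zero hsum hk
    rw [← hvar] at this
    nlinarith
  calc |d k| ≤ √((#s - 1) * σ ^ 2) := Real.abs_le_sqrt hsq
    _ = √(#s - 1) * σ := by rw [Real.sqrt_mul' _ (sq_nonneg σ), Real.sqrt_sq hσ]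

theorem sum_sq_le_of_sum_eq_zero {a b : ℝ} (hsum : ∑ i ∈ s, d i = 0)
    (hd : ∀ i ∈ s, a ≤ d i ∧ d i ≤ b) :
    ∑ i ∈ s, d i ^ 2 ≤ -(#s * (a * b)) := by
  have hpt : ∀ i ∈ s, d i ^ 2 ≤ (a + b) * d i - a * b := fun i hi => by
    nlinarith [mul_nonneg (sub_nonneg.mpr (hd i hi).1) (sub_nonneg.mpr (hd i hi).2)]
  calc ∑ i ∈ s, d i ^ 2 ≤ ∑ i ∈ s, ((a + b) * d i - a * b) := sum_le_sum hpt
    _ = -(#s * (a * b)) := by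
      rw [sum_sub_distrib, ← mul_sum, hsum, sum_const, nsmul_eq_mul]
      ring

theorem one_div_sqrt_le_max_div_and_le_sqrt (hsum : ∑ i ∈ s, d i = 0) {σ : ℝ} (hσ : 0 < σ)
    (hvar : #s * σ ^ 2 = ∑ i ∈ s, d i ^ 2) {kmin kmax : ι} (hmin : kmin ∈ s) (hmax : kmax ∈ s)
    (hd : ∀ i ∈ s, d kmin ≤ d i ∧ d i ≤ d kmax) :
    1 / √(#s - 1) ≤ d kmax / σ ∧ d kmax / σ ≤ √(#s - 1) := by
  set c := √(#s - 1)
  have hcard : (0 : ℝ) < #s := by exact_mod_cast card_pos.mpr ⟨kmax, hmax⟩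
  have hmax_nonneg : 0 ≤ d kmax := by
    have := sum_le_sum fun i hi => (hd i hi).2
    rw [hsum, sum_const, nsmul_eq_mul] at this
    exact nonneg_of_mul_nonneg_right this hcard
  have hupper := le_of_abs_le (abs_le_sqrt_card_sub_one_mul hsum hσ.le hvar hmax)
  have hlower := neg_le_of_abs_le (abs_le_sqrt_card_sub_one_mul hsum hσ.le hvar hmin)
  have hσ_sq : σ ^ 2 ≤ -(d kmin * d kmax) := by
    have := sum_sq_le_of_sum_eq_zero hsum hd
    rw [← hvar] at this
    nlinarith
  have hinner : σ ≤ c * d kmax := by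
    have : σ * σ ≤ σ * (c * d kmax) := by
      nlinarith [mul_le_mul_of_nonneg_right hlower hmax_nonneg]
    exact le_of_mul_le_mul_left this hσ
  have hc : 0 < c := pos_of_mul_pos_left (hσ.trans_le hinner) hmax_nonneg
  constructor
  · rw [div_le_div_iff₀ hc hσ]
    linarith
  · rwa [div_le_iff₀ hσ]

end Finset

theorem stmt_16_general (n : ℕ) (hn : 2 ≤ n) (x : ℕ → ℝ)
    (hmono : ∀ i j, 1 ≤ i → i ≤ j → j ≤ n → x i ≤ x j)
    (s : ℝ)
    (hs : s = Real.sqrt ((∑ i ∈ Icc 1 n, (x i - (∑ j ∈ Icc 1 n, x j) / n) ^ 2) / n))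
    (hspos : 0 < s) :
    (1 / Real.sqrt ((n : ℝ) - 1) ≤ (x n - (∑ j ∈ Icc 1 n, x j) / n) / s ∧
      (x n - (∑ j ∈ Icc 1 n, x j) / n) / s ≤ Real.sqrt ((n : ℝ) - 1)) ∧
    (-Real.sqrt ((n : ℝ) - 1) ≤ (x 1 - (∑ j ∈ Icc 1 n, x j) / n) / s ∧
      (x 1 - (∑ j ∈ Icc 1 n, x j) / n) / s ≤ -(1 / Real.sqrt ((n : ℝ) - 1))) := by
  set μ := (∑ j ∈ Icc 1 n, x j) / n
  have hcard : #(Icc 1 n) = n := by simp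
  have hn0 : (n : ℝ) ≠ 0 := by positivity
  have h1 : 1 ∈ Icc 1 n := mem_Icc.mpr ⟨le_rfl, by omega⟩
  have hn' : n ∈ Icc 1 n := mem_Icc.mpr ⟨by omega, le_rfl⟩
  have hsum : ∑ i ∈ Icc 1 n, (x i - μ) = 0 := by
    rw [sum_sub_distrib, sum_const, hcard, nsmul_eq_mul]
    rw [mul_div_cancel₀ _ hn0, sub_self]
  have hvar : (#(Icc 1 n) : ℝ) * s ^ 2 = ∑ i ∈ Icc 1 n, (x i - μ) ^ 2 := by
    rw [hs, Real.sq_sqrt (by positivity), hcard]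
    field_simp
  have hbetween : ∀ i ∈ Icc 1 n, x 1 - μ ≤ x i - μ ∧ x i - μ ≤ x n - μ := fun i hi => by
    obtain ⟨hi1, hin⟩ := mem_Icc.mp hi
    exact ⟨by linarith [hmono 1 i le_rfl hi1 hin], by linarith [hmono i n hi1 hin le_rfl]⟩
  have hmax := one_div_sqrt_le_max_div_and_le_sqrt hsum hspos hvar h1 hn' hbetween
  have hmin := one_div_sqrt_le_max_div_and_le_sqrt (d := fun i => -(x i - μ))
    (by rw [sum_neg_distrib, hsum, neg_zero]) hspos (by simpa only [neg_sq] using hvar) hn' h1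
    (fun i hi => ⟨neg_le_neg (hbetween i hi).2, neg_le_neg (hbetween i hi).1⟩)
  rw [hcard] at hmax hmin
  simp only [neg_div] at hmin
  exact ⟨hmax, neg_le.mp hmin.2, le_neg.mp hmin.1⟩

theorem stmt_16 (n : ℕ) (hn : 2 ≤ n) (x : ℕ → ℝ)
    (hmono : ∀ i j, 1 ≤ i → i ≤ j → j ≤ n → x i ≤ x j)
    (hlt : x 1 < x n)
    (s : ℝ)
    (hs : s = Real.sqrt ((∑ i ∈ Icc 1 n, (x i - (∑ j ∈ Icc 1 n, x j) / n) ^ 2) / n))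
    (hspos : 0 < s) :
    (1 / Real.sqrt ((n : ℝ) - 1) ≤ (x n - (∑ j ∈ Icc 1 n, x j) / n) / s ∧
      (x n - (∑ j ∈ Icc 1 n, x j) / n) / s ≤ Real.sqrt ((n : ℝ) - 1)) ∧
    (-Real.sqrt ((n : ℝ) - 1) ≤ (x 1 - (∑ j ∈ Icc 1 n, x j) / n) / s ∧
      (x 1 - (∑ j ∈ Icc 1 n, x j) / n) / s ≤ -(1 / Real.sqrt ((n : ℝ) - 1))) :=
  stmt_16_general n hn x hmono s hs hspos
end

section
/- Let z_1 ≤ ... ≤ z_n be reals with ∑z_i = 0 and ∑z_i² = n, where n = 2k, k ≥ 2. If z_k ≤ z_{k+1} < 0, then -(z_k + z_{k+1})/2 ≤ sqrt((k-1)/(k+1)). -/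
/-!
Write `x = z k ≤ y = z (k + 1) < 0`. The `k` smallest values are all `≤ x`, so they contribute
at most `k x` to the sum and at least `k x²` to the sum of squares. The `k - 1` values above
index `k + 1` must therefore have sum at least `-(k x + y) ≥ 0` while their squares sum to at
most `2k - k x² - y²`; Cauchy–Schwarz on these `k - 1` values gives
`(k x + y)² ≤ (k - 1) (2k - k x² - y²)`, and this quadratic constraint forces
`((x + y) / 2)² ≤ (k - 1) / (k + 1)`.
-/

open Finset

theorem sum_Icc_one_eq_add_add {M : Type*} [AddCommMonoid M] (f : ℕ → M) {k n : ℕ} (h : k < n) :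
    ∑ i ∈ Icc 1 n, f i = ∑ i ∈ Icc 1 k, f i + f (k + 1) + ∑ i ∈ Icc (k + 2) n, f i := by
  simp only [← Ico_add_one_right_eq_Icc]
  rw [← sum_Ico_consecutive f (by omega : 1 ≤ k + 1) (by omega : k + 1 ≤ n + 1),
      sum_eq_sum_Ico_succ_bot (by omega : k + 1 < n + 1)]
  exact (add_assoc _ _ _).symm

theorem card_mul_sq_le_sum_sq_of_le_of_nonpos {ι : Type*} (s : Finset ι) (f : ι → ℝ) {c : ℝ}
    (hc : c ≤ 0) (hf : ∀ i ∈ s, f i ≤ c) : #s * c ^ 2 ≤ ∑ i ∈ s, f i ^ 2 := by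
  simpa [nsmul_eq_mul] using card_nsmul_le_sum s (fun i => f i ^ 2) (c ^ 2) fun i hi => by
    nlinarith [hf i hi]

theorem neg_avg_le_sqrt_of_sq_le {k x y : ℝ} (hk : 1 ≤ k) (hxy : x ≤ y) (hy : y ≤ 0)
    (h : (k * x + y) ^ 2 ≤ (k - 1) * (2 * k - k * x ^ 2 - y ^ 2)) :
    -((x + y) / 2) ≤ √((k - 1) / (k + 1)) := by
  refine Real.le_sqrt_of_sq_le ?_
  rw [le_div_iff₀ (by linarith)]
  -- `h` says `k (2k - 1) x² + 2k x y + k y² ≤ 2k (k - 1)`;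
  -- twice this exceeds the goal times `k` by `k (k - 1) (3x + y) (x - y) ≥ 0`.
  have hgap : 0 ≤ k * (k - 1) * ((-3 * x - y) * (y - x)) :=
    mul_nonneg (mul_nonneg (by linarith) (by linarith)) (mul_nonneg (by linarith) (by linarith))
  nlinarith

theorem stmt_19 (k n : ℕ) (hk : 2 ≤ k) (hn : n = 2 * k) (z : ℕ → ℝ)
    (hmono : ∀ i j, 1 ≤ i → i ≤ j → j ≤ n → z i ≤ z j)
    (hsum : ∑ i ∈ Icc 1 n, z i = 0)
    (hsq : ∑ i ∈ Icc 1 n, z i ^ 2 = n)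
    (hle : z k ≤ z (k + 1)) (hneg : z (k + 1) < 0) :
    -((z k + z (k + 1)) / 2) ≤ Real.sqrt (((k : ℝ) - 1) / (k + 1)) := by
  have hkn : k < n := by omega
  have hhead_le : ∀ i ∈ Icc 1 k, z i ≤ z k := fun i hi =>
    hmono i k (mem_Icc.1 hi).1 (mem_Icc.1 hi).2 (by omega)
  have hhead : ∑ i ∈ Icc 1 k, z i ≤ k * z k := by
    simpa [nsmul_eq_mul] using sum_le_card_nsmul _ _ _ hhead_le
  have hhead_sq : k * z k ^ 2 ≤ ∑ i ∈ Icc 1 k, z i ^ 2 := by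
    simpa using card_mul_sq_le_sum_sq_of_le_of_nonpos _ z (by linarith) hhead_le
  have htail_card : ((#(Icc (k + 2) n) : ℕ) : ℝ) = k - 1 := by
    rw [Nat.card_Icc, show n + 1 - (k + 2) = k - 1 by omega, Nat.cast_sub (by omega), Nat.cast_one]
  have hCS := sq_sum_le_card_mul_sum_sq (s := Icc (k + 2) n) (f := z)
  rw [htail_card] at hCS
  rw [sum_Icc_one_eq_add_add _ hkn] at hsum hsq
  have htail : -(k * z k + z (k + 1)) ≤ ∑ i ∈ Icc (k + 2) n, z i := by linarith
  have htail_sq : (k * z k + z (k + 1)) ^ 2 ≤ (∑ i ∈ Icc (k + 2) n, z i) ^ 2 := by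
    rw [← neg_sq]
    exact pow_le_pow_left₀ (by nlinarith) htail 2
  have hk1 : (1 : ℝ) ≤ k := by exact_mod_cast (by omega : 1 ≤ k)
  refine neg_avg_le_sqrt_of_sq_le hk1 hle hneg.le ?_
  subst hn
  push_cast at hsq
  nlinarith
end
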